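/- Let U be an unbalanced critical two-dimensional update family with constant κ := 3ν. Let K ⊆ ℤ² be a finite set with 2 ≤ |K| < ∞ such that [K] is strongly connected. Then there exists a partition K = K₁ ∪ K₂ into nonempty disjoint sets such that [K₁], [K₂] and [K₁] ∪ [K₂] are all strongly connected. -/

import Mathlib

open MeasureTheory Filter Set

namespace BP

/-- A site of the two-dimensional lattice `ℤ²`. -/
abbrev Site := ℤ × ℤ

/-- One step of the `U`-bootstrap process: a site becomes infected if some update rule,
translated by it, is already entirely infected. -/
def step (U : Finset (Finset Site)) (A : Set Site) : Set Site :=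
  A ∪ {x : Site | ∃ X ∈ U, ∀ y ∈ X, x + y ∈ A}

/-- The sets `A_t` of the `U`-bootstrap process. -/
def iter (U : Finset (Finset Site)) (A : Set Site) : ℕ → Set Site
  | 0 => A
  | t + 1 => step U (iter U A t)

/-- The closure `[A]` of `A` under the `U`-bootstrap process. -/
def bclosure (U : Finset (Finset Site)) (A : Set Site) : Set Site :=
  ⋃ t : ℕ, iter U A t

/-- The inner product of a site with a real vector. -/
noncomputable def ip (x : Site) (u : ℝ × ℝ) : ℝ := (x.1 : ℝ) * u.1 + (x.2 : ℝ) * u.2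

/-- The inner product of two real vectors. -/
noncomputable def ipR (v w : ℝ × ℝ) : ℝ := v.1 * w.1 + v.2 * w.2

/-- `u` is a unit vector, i.e. an element of `S¹`. -/
def unitVec (u : ℝ × ℝ) : Prop := u.1 ^ 2 + u.2 ^ 2 = 1

/-- The discrete half-plane `H_u = {x : ⟨x,u⟩ < 0}`. -/
def halfPlane (u : ℝ × ℝ) : Set Site := {x : Site | ip x u < 0}

/-- `u` is a stable direction for `U`: the half-plane `H_u` is closed under the process. -/
def IsStable (U : Finset (Finset Site)) (u : ℝ × ℝ) : Prop :=
  bclosure U (halfPlane u) = halfPlane u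

/-- The stable set `S = S(U)`, as a set of unit vectors. -/
def stableSet (U : Finset (Finset Site)) : Set (ℝ × ℝ) :=
  {u | unitVec u ∧ IsStable U u}

/-- The discrete line `ℓ_u` through the origin perpendicular to `u`. -/
def line (u : ℝ × ℝ) : Set Site := {x | ip x u = 0}

/-- The perpendicular vector pointing to the right as one looks in the direction `u`. -/
def rightPerp (u : ℝ × ℝ) : ℝ × ℝ := (u.2, -u.1)

/-- `ℓ_u⁺`: the origin together with the sites of `ℓ_u` to the right of the origin
(as one looks in the direction `u`). -/
def linePlus (u : ℝ × ℝ) : Set Site := {x | ip x u = 0 ∧ 0 ≤ ip x (rightPerp u)}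

/-- `ℓ_u⁻`: the origin together with the sites of `ℓ_u` to the left of the origin. -/
def lineMinus (u : ℝ × ℝ) : Set Site := {x | ip x u = 0 ∧ ip x (rightPerp u) ≤ 0}

/-- `α⁺(u)`: the minimum cardinality of a finite set `Z ⊆ ℤ²` such that `[H_u ∪ Z]`
contains infinitely many sites of `ℓ_u⁺` (and `⊤ = ∞` if there is no such set). -/
noncomputable def alphaPlus (U : Finset (Finset Site)) (u : ℝ × ℝ) : ℕ∞ :=
  sInf {n : ℕ∞ | ∃ Z : Finset Site, (Z.card : ℕ∞) = n ∧
    (bclosure U (halfPlane u ∪ ↑Z) ∩ linePlus u).Infinite}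

/-- `α⁻(u)`: as `α⁺(u)`, but for `ℓ_u⁻`. -/
noncomputable def alphaMinus (U : Finset (Finset Site)) (u : ℝ × ℝ) : ℕ∞ :=
  sInf {n : ℕ∞ | ∃ Z : Finset Site, (Z.card : ℕ∞) = n ∧
    (bclosure U (halfPlane u ∪ ↑Z) ∩ lineMinus u).Infinite}

/-- The difficulty `α(u)` of a direction `u`: `min {α⁺(u), α⁻(u)}` if both are finite,
and `∞` otherwise. -/
noncomputable def difficulty (U : Finset (Finset Site)) (u : ℝ × ℝ) : ℕ∞ :=
  if alphaPlus U u ≠ ⊤ ∧ alphaMinus U u ≠ ⊤ then min (alphaPlus U u) (alphaMinus U u)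
  else ⊤

/-- `ᾱ(u) = min {α⁺(u), α⁻(u)}`. -/
noncomputable def alphaBar (U : Finset (Finset Site)) (u : ℝ × ℝ) : ℕ∞ :=
  min (alphaPlus U u) (alphaMinus U u)

/-- The difficulty `α = α(U)` of the update family `U`: the minimum over open
semicircles `C` of the maximum of `α(u)` over `u ∈ C`.  (An open semicircle is
parametrised by its midpoint `w`.) -/
noncomputable def famDifficulty (U : Finset (Finset Site)) : ℕ∞ :=
  ⨅ (w : ℝ × ℝ) (_ : unitVec w),
    ⨆ (u : ℝ × ℝ) (_ : unitVec u) (_ : 0 < ipR u w), difficulty U u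

/-- `U` is critical: some (closed) semicircle has finite intersection with the stable
set, and every open semicircle meets the stable set. -/
def Critical (U : Finset (Finset Site)) : Prop :=
  (∃ w : ℝ × ℝ, unitVec w ∧ (stableSet U ∩ {u | 0 ≤ ipR u w}).Finite) ∧
  (∀ w : ℝ × ℝ, unitVec w → (stableSet U ∩ {u | 0 < ipR u w}).Nonempty)

/-- The balancedness condition: some closed semicircle `C` has `α(u) ≤ α(U)`
for every `u ∈ C`.  A critical family is balanced iff this holds, unbalanced otherwise. -/
def BalancedCond (U : Finset (Finset Site)) : Prop :=
  ∃ w : ℝ × ℝ, unitVec w ∧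
    ∀ u : ℝ × ℝ, unitVec u → 0 ≤ ipR u w → difficulty U u ≤ famDifficulty U

/-- The time `τ` at which the origin is infected (`⊤ = ∞` if it never is). -/
noncomputable def tau (U : Finset (Finset Site)) (A : Set Site) : ℕ∞ :=
  ⨅ (t : ℕ) (_ : (0 : Site) ∈ iter U A t), (t : ℕ∞)

/-- Configurations of initially infected sites in the plane. -/
abbrev Config := Site → Bool

/-- The set of initially infected sites of a configuration. -/
def initSet (ω : Config) : Set Site := {x | ω x = true}

/-- `μ` is the product Bernoulli(`p`) measure (law of a "`p`-random set"): a probability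
measure giving every cylinder event its product probability. -/
def IsBernoulliProduct {ι : Type*} (p : ℝ) (μ : Measure (ι → Bool)) : Prop :=
  IsProbabilityMeasure μ ∧
    ∀ S : Finset ι, ∀ f : ι → Bool,
      μ {ω | ∀ x ∈ S, ω x = f x} =
        ∏ x ∈ S, if f x then ENNReal.ofReal p else ENNReal.ofReal (1 - p)

/-- Reduction of a site modulo `n`, giving a point of the torus `ℤ_n²`. -/
def projT (n : ℕ) (y : Site) : ZMod n × ZMod n := ((y.1 : ZMod n), (y.2 : ZMod n))

/-- One step of the `U`-bootstrap process on the torus `ℤ_n²`. -/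
def stepT (n : ℕ) (U : Finset (Finset Site)) (A : Set (ZMod n × ZMod n)) :
    Set (ZMod n × ZMod n) :=
  A ∪ {x | ∃ X ∈ U, ∀ y ∈ X, x + projT n y ∈ A}

/-- The sets `A_t` of the `U`-bootstrap process on the torus. -/
def iterT (n : ℕ) (U : Finset (Finset Site)) (A : Set (ZMod n × ZMod n)) :
    ℕ → Set (ZMod n × ZMod n)
  | 0 => A
  | t + 1 => stepT n U (iterT n U A t)

/-- The closure of `A` under the `U`-bootstrap process on the torus. -/
def bclosureT (n : ℕ) (U : Finset (Finset Site)) (A : Set (ZMod n × ZMod n)) :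
    Set (ZMod n × ZMod n) :=
  ⋃ t : ℕ, iterT n U A t

/-- `A` percolates on the torus `ℤ_n²`. -/
def PercolatesT (n : ℕ) (U : Finset (Finset Site)) (A : Set (ZMod n × ZMod n)) : Prop :=
  bclosureT n U A = Set.univ

/-- The critical probability `p_c(ℤ_n², U)`, where `P` is the family of product
Bernoulli measures on subsets of the torus. -/
noncomputable def pcT (n : ℕ) (U : Finset (Finset Site))
    (P : ℝ → Measure ((ZMod n × ZMod n) → Bool)) : ℝ :=
  sInf {p : ℝ | p ∈ Set.Icc (0 : ℝ) 1 ∧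
    1 / 2 ≤ P p {ω | PercolatesT n U {x | ω x = true}}}

/-- The Euclidean (`ℓ₂`) distance between two sites. -/
noncomputable def dist2 (x y : Site) : ℝ :=
  Real.sqrt ((((x.1 - y.1 : ℤ) : ℝ)) ^ 2 + (((x.2 - y.2 : ℤ) : ℝ)) ^ 2)

/-- A set of sites is (strongly) connected in the graph `G_κ` joining sites at
Euclidean distance at most `κ`. -/
def Conn (κ : ℝ) (S : Set Site) : Prop :=
  ∀ x ∈ S, ∀ y ∈ S,
    Relation.ReflTransGen (fun a b : Site => b ∈ S ∧ dist2 a b ≤ κ) x y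

/-- The range `ν` of the update family:
`ν = max {‖x − y‖₂ : x, y ∈ X ∪ {0}, X ∈ U}`. -/
noncomputable def nu (U : Finset (Finset Site)) : ℝ :=
  sSup {d : ℝ | ∃ X ∈ U, ∃ x ∈ insert (0 : Site) X, ∃ y ∈ insert (0 : Site) X,
    d = dist2 x y}

/-- The diameter of a set of sites. -/
noncomputable def diam2 (K : Set Site) : ℝ :=
  sSup {d : ℝ | ∃ x ∈ K, ∃ y ∈ K, d = dist2 x y}

/-- The projection `π(K, u) = max {|⟨x − y, u⟩| : x, y ∈ K}`. -/
noncomputable def proj (K : Set Site) (u : ℝ × ℝ) : ℝ :=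
  sSup {d : ℝ | ∃ x ∈ K, ∃ y ∈ K, d = |ip x u - ip y u|}

/-- A `T`-droplet: a nonempty intersection of translated half-planes `H_u + a_u`,
`u ∈ T`. -/
def IsDroplet (T : Set (ℝ × ℝ)) (D : Set Site) : Prop :=
  D.Nonempty ∧ ∃ a : (ℝ × ℝ) → Site, D = ⋂ u ∈ T, {x : Site | ip (x - a u) u < 0}

/-- `D` is the smallest `T`-droplet containing `K`. -/
def IsMinDroplet (T : Set (ℝ × ℝ)) (K D : Set Site) : Prop :=
  IsDroplet T D ∧ K ⊆ D ∧ ∀ D' : Set Site, IsDroplet T D' → K ⊆ D' → D ⊆ D'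

/-- An `a`-cluster: a strongly connected set of `a` sites. -/
def IsCluster (κ : ℝ) (a : ℕ) (B : Finset Site) : Prop :=
  B.card = a ∧ Conn κ ↑B

/-- One step of the `α`-covering algorithm: two droplets of the current collection lying
within strong-connectivity reach of a common translate of `D̂` are replaced by the
smallest `S_B`-droplet containing their union. -/
inductive CoverStep (SB : Set (ℝ × ℝ)) (κ : ℝ) (Dhat : Set Site) :
    Multiset (Set Site) → Multiset (Set Site) → Prop
  | merge (rest : Multiset (Set Site)) (D₁ D₂ D' : Set Site) (x : Site) :
      Conn κ (D₁ ∪ D₂ ∪ ((fun z => z + x) '' Dhat)) →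
      IsMinDroplet SB (D₁ ∪ D₂) D' →
      CoverStep SB κ Dhat (D₁ ::ₘ D₂ ::ₘ rest) (D' ::ₘ rest)

/-- `𝒟` is an `α`-cover of `K`: a possible output of the `α`-covering algorithm, started
from a maximal collection of pairwise disjoint `a`-clusters of `K`, each contained in a
translate of `D̂`. -/
def IsAlphaCover (κ : ℝ) (a : ℕ) (SB : Set (ℝ × ℝ)) (Dhat : Set Site)
    (K : Set Site) (𝒟 : Multiset (Set Site)) : Prop :=
  ∃ B : List (Finset Site), ∃ c : List Site,
    B.length = c.length ∧
    (∀ Bi ∈ B, IsCluster κ a Bi ∧ ↑Bi ⊆ K) ∧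
    B.Pairwise (fun B₁ B₂ => Disjoint B₁ B₂) ∧
    (∀ B' : Finset Site, IsCluster κ a B' → ↑B' ⊆ K → ∃ Bi ∈ B, ¬ Disjoint B' Bi) ∧
    (∀ i : ℕ, ∀ h₁ : i < B.length, ∀ h₂ : i < c.length,
      ↑(B.get ⟨i, h₁⟩) ⊆ (fun z => z + c.get ⟨i, h₂⟩) '' Dhat) ∧
    Relation.ReflTransGen (CoverStep SB κ Dhat)
      ↑(c.map fun v => (fun z => z + v) '' Dhat) 𝒟

/-- The droplet `D` is `α`-covered (with respect to the initial set `A`). -/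
def AlphaCovered (κ : ℝ) (a : ℕ) (SB : Set (ℝ × ℝ)) (Dhat : Set Site)
    (A D : Set Site) : Prop :=
  IsAlphaCover κ a SB Dhat (D ∩ A) {D}

/-- The constant `ρ` used for balanced families:
`ρ = max {‖y − Z‖₂ : u ∈ S_B, |Z| = α − 1, y ∈ [H_u ∪ Z] ∖ H_u}`. -/
noncomputable def rho (U : Finset (Finset Site)) (SB : Set (ℝ × ℝ)) (a : ℕ) : ℝ :=
  sSup {d : ℝ | ∃ u ∈ SB, ∃ Z : Finset Site, Z.card = a - 1 ∧
    ∃ y ∈ bclosure U (halfPlane u ∪ ↑Z) \ halfPlane u,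
      d = sInf {r : ℝ | ∃ z ∈ Z, r = dist2 y z}}

/-- The connectivity constant `κ = 2(ρ + ν)` for balanced families. -/
noncomputable def kappaB (U : Finset (Finset Site)) (SB : Set (ℝ × ℝ)) (a : ℕ) : ℝ :=
  2 * (rho U SB a + nu U)

/-- A valid choice of the finite set `S_B` of stable directions for a balanced family:
`ᾱ(u) ≥ α` for all `u ∈ S_B`, and `S_B` meets every open semicircle. -/
def ValidSB (U : Finset (Finset Site)) (a : ℕ) (SB : Set (ℝ × ℝ)) : Prop :=
  SB.Finite ∧ SB ⊆ stableSet U ∧ (∀ u ∈ SB, (a : ℕ∞) ≤ alphaBar U u) ∧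
  ∀ w : ℝ × ℝ, unitVec w → ∃ u ∈ SB, 0 < ipR u w

/-- `D` is internally spanned by `A`: some strongly connected subset `L` of `[D ∩ A]`
has `D` as the smallest `T`-droplet containing it. -/
def InternallySpanned (U : Finset (Finset Site)) (T : Set (ℝ × ℝ)) (κ : ℝ)
    (A D : Set Site) : Prop :=
  ∃ L : Set Site, L ⊆ bclosure U (D ∩ A) ∧ Conn κ L ∧ IsMinDroplet T L D

/-- A valid choice of the set `S_U = {u*, −u*, u^l, u^r}` of stable directions for an
unbalanced family: `min {α(u*), α(−u*)} ≥ α + 1`, `u^l` (resp. `u^r`) lies in the open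
semicircle to the left (resp. right) of `u*`, and `min {ᾱ(u^l), ᾱ(u^r)} = α`. -/
def ValidSU (U : Finset (Finset Site)) (a : ℕ) (ustar ul ur : ℝ × ℝ) : Prop :=
  ustar ∈ stableSet U ∧ -ustar ∈ stableSet U ∧ ul ∈ stableSet U ∧ ur ∈ stableSet U ∧
  (a : ℕ∞) + 1 ≤ difficulty U ustar ∧ (a : ℕ∞) + 1 ≤ difficulty U (-ustar) ∧
  0 < ipR ul (-ustar.2, ustar.1) ∧ 0 < ipR ur (ustar.2, -ustar.1) ∧
  min (alphaBar U ul) (alphaBar U ur) = (a : ℕ∞)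

/-- The point of `S¹` at angle `θ`. -/
noncomputable def circlePt (θ : ℝ) : ℝ × ℝ := (Real.cos θ, Real.sin θ)

/-- `u` is a rational direction: it is parallel to a nonzero integer vector,
i.e. it has rational or infinite slope. -/
def RationalDir (u : ℝ × ℝ) : Prop :=
  ∃ x : Site, x ≠ 0 ∧ (x.1 : ℝ) * u.2 = (x.2 : ℝ) * u.1

/-- The closed arc of directions from `u` to `v` (anticlockwise). -/
def arcFrom (u v : ℝ × ℝ) : Set (ℝ × ℝ) :=
  {w | ∃ θ₁ θ₂ θ : ℝ, circlePt θ₁ = u ∧ circlePt θ₂ = v ∧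
    θ₁ ≤ θ₂ ∧ θ₂ < θ₁ + 2 * Real.pi ∧ θ ∈ Set.Icc θ₁ θ₂ ∧ circlePt θ = w}

/-- `u` and `v` are consecutive elements of `T`:
`u ≠ v` and `T ∩ [u, v] = {u, v}`. -/
def ConsecutiveIn (T : Set (ℝ × ℝ)) (u v : ℝ × ℝ) : Prop :=
  u ≠ v ∧ T ∩ arcFrom u v = {u, v}

end BP

/-!
Start from the partition of `K` into singletons and repeatedly merge two parts whose closures
come within distance `κ` of each other. Since `κ ≥ ν`, the closure of a strongly connected set
is strongly connected, and `[P ∪ Q] = [[P] ∪ [Q]]`, so every part keeps a strongly connected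
closure. Such a pair of parts exists as long as there are at least two: otherwise the union of
the closures of the parts would be closed under the process, hence contain `[K]`, and split it
into pieces more than `κ` apart. Stop when two parts are left.
-/

namespace Finpartition

open Finset

variable {α : Type*} [DistribLattice α] [OrderBot α] [DecidableEq α] {a p q : α}

def mergeParts (P : Finpartition a) (hp : p ∈ P.parts) (hq : q ∈ P.parts) (hpq : p ≠ q) :
    Finpartition a :=
  (P.ofSubset (parts := (P.parts.erase p).erase q)
      ((erase_subset _ _).trans (erase_subset _ _)) rfl).extend (b := p ⊔ q)
    (fun h => P.ne_bot hp (le_bot_iff.mp (h ▸ le_sup_left)))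
    (Finset.disjoint_sup_left.mpr fun r hr => by
      obtain ⟨hrq, hr⟩ := Finset.mem_erase.mp hr
      obtain ⟨hrp, hr⟩ := Finset.mem_erase.mp hr
      exact disjoint_sup_right.mpr ⟨P.disjoint hr hp hrp, P.disjoint hr hq hrq⟩)
    (by
      conv_rhs => rw [← P.sup_parts, ← insert_erase hp,
        ← insert_erase (mem_erase.mpr ⟨hpq.symm, hq⟩)]
      rw [sup_insert, sup_insert, id, id]
      ac_rfl)

theorem parts_mergeParts (P : Finpartition a) (hp : p ∈ P.parts) (hq : q ∈ P.parts)
    (hpq : p ≠ q) :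
    (P.mergeParts hp hq hpq).parts = insert (p ⊔ q) ((P.parts.erase p).erase q) :=
  rfl

theorem card_mergeParts (P : Finpartition a) (hp : p ∈ P.parts) (hq : q ∈ P.parts)
    (hpq : p ≠ q) : #(P.mergeParts hp hq hpq).parts + 1 = #P.parts := by
  rw [mergeParts, card_extend, ofSubset_parts, card_erase_of_mem (mem_erase.mpr ⟨hpq.symm, hq⟩),
    card_erase_of_mem hp]
  have := Finset.one_lt_card.mpr ⟨p, hp, q, hq, hpq⟩
  omega

end Finpartition

namespace BP

open scoped Finset

section Closure

variable {U : Finset (Finset Site)} {A B : Set Site}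

theorem subset_step (A : Set Site) : A ⊆ step U A := subset_union_left

theorem step_mono (h : A ⊆ B) : step U A ⊆ step U B :=
  union_subset_union h fun _ ⟨X, hX, hx⟩ => ⟨X, hX, fun y hy => h (hx y hy)⟩

theorem iter_monotone (A : Set Site) : Monotone (iter U A) :=
  monotone_nat_of_le_succ fun _ => subset_step _

theorem iter_subset_bclosure (A : Set Site) (t : ℕ) : iter U A t ⊆ bclosure U A :=
  subset_iUnion (iter U A) t

theorem subset_bclosure (A : Set Site) : A ⊆ bclosure U A := iter_subset_bclosure A 0

theorem bclosure_mono (h : A ⊆ B) : bclosure U A ⊆ bclosure U B := by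
  have key : ∀ t, iter U A t ⊆ iter U B t := by
    intro t
    induction t with
    | zero => exact h
    | succ t ih => exact step_mono ih
  exact iUnion_mono key

/-- Each rule is finite, so its translate lies in a single `A_t`. -/
theorem step_bclosure_subset (A : Set Site) : step U (bclosure U A) ⊆ bclosure U A := by
  rintro x (hx | ⟨X, hX, hx⟩)
  · exact hx
  · obtain ⟨t, ht⟩ :=
      (iter_monotone (U := U) A).directed_le.exists_mem_subset_of_finset_subset_biUnion
        (s := X.image (x + ·)) (by rw [Finset.coe_image, image_subset_iff]; exact hx)
    exact iter_subset_bclosure A (t + 1)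
      (Or.inr ⟨X, hX, fun y hy => ht (Finset.mem_coe.mpr (Finset.mem_image_of_mem _ hy))⟩)

theorem bclosure_subset_of_step_subset (hAB : A ⊆ B) (hB : step U B ⊆ B) :
    bclosure U A ⊆ B := by
  refine iUnion_subset fun t => ?_
  induction t with
  | zero => exact hAB
  | succ t ih => exact (step_mono ih).trans hB

theorem bclosure_union_bclosure (A B : Set Site) :
    bclosure U (bclosure U A ∪ bclosure U B) = bclosure U (A ∪ B) :=
  (bclosure_subset_of_step_subset
    (union_subset (bclosure_mono subset_union_left) (bclosure_mono subset_union_right))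
    (step_bclosure_subset _)).antisymm
  (bclosure_mono (union_subset_union (subset_bclosure A) (subset_bclosure B)))

/-- The empty update rule would infect every site, the origin included. -/
theorem nonempty_of_mem_of_isStable {u : ℝ × ℝ} (hu : IsStable U u) :
    ∀ X ∈ U, X.Nonempty := by
  intro X hX
  by_contra hempty
  have h0 : (0 : Site) ∈ step U (halfPlane u) :=
    Or.inr ⟨X, hX, by simp [Finset.not_nonempty_iff_eq_empty.mp hempty]⟩
  have := iter_subset_bclosure (U := U) (halfPlane u) 1 h0
  rw [hu] at this
  simp [halfPlane, ip] at this

end Closure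

section Distance

theorem dist2_self (x : Site) : dist2 x x = 0 := by simp [dist2]

theorem dist2_comm (x y : Site) : dist2 x y = dist2 y x := by
  unfold dist2
  push_cast
  ring_nf

theorem dist2_add_left (x y z : Site) : dist2 (x + y) (x + z) = dist2 y z := by
  unfold dist2
  simp only [Prod.fst_add, Prod.snd_add]
  push_cast
  ring_nf

theorem dist2_nonneg (x y : Site) : 0 ≤ dist2 x y := Real.sqrt_nonneg _

theorem nu_nonneg (U : Finset (Finset Site)) : 0 ≤ nu U :=
  Real.sSup_nonneg fun _ ⟨_, _, x, _, y, _, hd⟩ => hd ▸ dist2_nonneg x y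

variable {U : Finset (Finset Site)}

theorem dist2_add_le_nu {X : Finset Site} (hX : X ∈ U) (x : Site) {y z : Site}
    (hy : y ∈ insert 0 X) (hz : z ∈ insert 0 X) : dist2 (x + y) (x + z) ≤ nu U := by
  let S := U.biUnion (insert 0)
  have hbdd : BddAbove {d : ℝ | ∃ X ∈ U, ∃ x ∈ insert (0 : Site) X,
      ∃ y ∈ insert (0 : Site) X, d = dist2 x y} := by
    refine (((S ×ˢ S : Finset (Site × Site)).finite_toSet.image
      fun p => dist2 p.1 p.2).subset ?_).bddAbove
    rintro _ ⟨X, hX, x, hx, y, hy, rfl⟩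
    refine ⟨(x, y), ?_, rfl⟩
    simp only [S, Finset.coe_product, mem_prod, Finset.mem_coe, Finset.mem_biUnion]
    exact ⟨⟨X, hX, hx⟩, X, hX, hy⟩
  rw [dist2_add_left]
  exact le_csSup hbdd ⟨X, hX, y, hy, z, hz, rfl⟩

end Distance

section Connectivity

variable {κ : ℝ} {S T : Set Site}

theorem Conn.singleton (κ : ℝ) (x : Site) : Conn κ {x} := by
  rintro a rfl b rfl
  exact .refl

theorem reflTransGen_near_mono (hST : S ⊆ T) {x y : Site}
    (h : Relation.ReflTransGen (fun a b => b ∈ S ∧ dist2 a b ≤ κ) x y) :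
    Relation.ReflTransGen (fun a b => b ∈ T ∧ dist2 a b ≤ κ) x y := by
  induction h with
  | refl => exact .refl
  | tail _ hbc ih => exact ih.tail ⟨hST hbc.1, hbc.2⟩

theorem Conn.union_of_dist_le (hS : Conn κ S) (hT : Conn κ T) {p q : Site} (hp : p ∈ S)
    (hq : q ∈ T) (hpq : dist2 p q ≤ κ) : Conn κ (S ∪ T) := by
  have hS' := fun x hx y hy =>
    reflTransGen_near_mono (T := S ∪ T) subset_union_left (hS x hx y hy)
  have hT' := fun x hx y hy =>
    reflTransGen_near_mono (T := S ∪ T) subset_union_right (hT x hx y hy)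
  have hpq' : Relation.ReflTransGen (fun a b => b ∈ S ∪ T ∧ dist2 a b ≤ κ) p q :=
    .single ⟨Or.inr hq, hpq⟩
  have hqp' : Relation.ReflTransGen (fun a b => b ∈ S ∪ T ∧ dist2 a b ≤ κ) q p :=
    .single ⟨Or.inl hp, dist2_comm q p ▸ hpq⟩
  rintro x (hx | hx) y (hy | hy)
  · exact hS' x hx y hy
  · exact (hS' x hx p hp).trans (hpq'.trans (hT' q hq y hy))
  · exact (hT' x hx q hq).trans (hqp'.trans (hS' p hp y hy))
  · exact hT' x hx y hy

theorem mem_of_reflTransGen_of_isolated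
    (hT : ∀ a ∈ T, ∀ b ∈ S, dist2 a b ≤ κ → b ∈ T) {x y : Site} (hx : x ∈ T)
    (h : Relation.ReflTransGen (fun a b => b ∈ S ∧ dist2 a b ≤ κ) x y) : y ∈ T := by
  induction h with
  | refl => exact hx
  | tail _ hbc ih => exact hT _ ih _ hbc.1 hbc.2

variable {U : Finset (Finset Site)} (hne : ∀ X ∈ U, X.Nonempty) (hκ : nu U ≤ κ)
include hne hκ

theorem exists_dist2_le_of_mem_step {A : Set Site} {z : Site} (hz : z ∈ step U A) :
    ∃ z' ∈ A, dist2 z z' ≤ κ := by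
  rcases hz with hz | ⟨X, hX, hz⟩
  · exact ⟨z, hz, (dist2_self z).symm ▸ (nu_nonneg U).trans hκ⟩
  · obtain ⟨y, hy⟩ := hne X hX
    refine ⟨z + y, hz y hy, ?_⟩
    simpa using (dist2_add_le_nu hX z (Finset.mem_insert_self 0 X)
      (Finset.mem_insert_of_mem hy)).trans hκ

theorem conn_step {A : Set Site} (h : Conn κ A) : Conn κ (step U A) := by
  intro x hx y hy
  obtain ⟨x', hx', hxx'⟩ := exists_dist2_le_of_mem_step hne hκ hx
  obtain ⟨y', hy', hyy'⟩ := exists_dist2_le_of_mem_step hne hκ hy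
  have mid := reflTransGen_near_mono (subset_step (U := U) A) (h x' hx' y' hy')
  exact (Relation.ReflTransGen.head ⟨subset_step A hx', hxx'⟩ mid).tail
    ⟨hy, dist2_comm y y' ▸ hyy'⟩

theorem conn_bclosure {A : Set Site} (h : Conn κ A) : Conn κ (bclosure U A) := by
  have hiter : ∀ t, Conn κ (iter U A t) := by
    intro t
    induction t with
    | zero => exact h
    | succ t ih => exact conn_step hne hκ ih
  intro x hx y hy
  obtain ⟨s, hs⟩ := mem_iUnion.mp hx
  obtain ⟨t, ht⟩ := mem_iUnion.mp hy
  exact reflTransGen_near_mono (iter_subset_bclosure A _) (hiter (max s t) x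
    (iter_monotone A (le_max_left s t) hs) y (iter_monotone A (le_max_right s t) ht))

theorem conn_bclosure_union (hS : Conn κ (bclosure U S)) (hT : Conn κ (bclosure U T))
    {p q : Site} (hp : p ∈ bclosure U S) (hq : q ∈ bclosure U T) (hpq : dist2 p q ≤ κ) :
    Conn κ (bclosure U (S ∪ T)) :=
  bclosure_union_bclosure (U := U) S T ▸ conn_bclosure hne hκ (hS.union_of_dist_le hT hp hq hpq)

end Connectivity

section Splitting

variable {U : Finset (Finset Site)} {κ : ℝ}

/-- A translated rule has diameter at most `ν`, so it cannot meet two of these closures. -/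
theorem step_biUnion_bclosure_subset {ι : Type*} {s : Set ι} (hs : s.Nonempty)
    (A : ι → Set Site) (hfar : ∀ i ∈ s, ∀ j ∈ s, i ≠ j →
      ∀ x ∈ bclosure U (A i), ∀ y ∈ bclosure U (A j), nu U < dist2 x y) :
    step U (⋃ i ∈ s, bclosure U (A i)) ⊆ ⋃ i ∈ s, bclosure U (A i) := by
  rintro x (hx | ⟨X, hX, hx⟩)
  · exact hx
  obtain ⟨i, hi, hXi⟩ : ∃ i ∈ s, ∀ y ∈ X, x + y ∈ bclosure U (A i) := by
    rcases X.eq_empty_or_nonempty with rfl | ⟨y₀, hy₀⟩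
    · exact ⟨hs.some, hs.some_mem, by simp⟩
    obtain ⟨i, hi, hy₀i⟩ := mem_iUnion₂.mp (hx y₀ hy₀)
    refine ⟨i, hi, fun y hy => ?_⟩
    obtain ⟨j, hj, hyj⟩ := mem_iUnion₂.mp (hx y hy)
    obtain rfl : j = i := by
      by_contra hji
      exact (hfar j hj i hi hji _ hyj _ hy₀i).not_ge
        (dist2_add_le_nu hX x (Finset.mem_insert_of_mem hy) (Finset.mem_insert_of_mem hy₀))
    exact hyj
  exact mem_iUnion₂.mpr ⟨i, hi, step_bclosure_subset _ (Or.inr ⟨X, hX, hXi⟩)⟩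

theorem exists_parts_bclosure_dist2_le (hκ : nu U ≤ κ) {K : Finset Site} (P : Finpartition K)
    (hP : 1 < #P.parts) (hconn : Conn κ (bclosure U K)) :
    ∃ p ∈ P.parts, ∃ q ∈ P.parts, p ≠ q ∧
      ∃ x ∈ bclosure U p, ∃ y ∈ bclosure U q, dist2 x y ≤ κ := by
  by_contra! hfar
  obtain ⟨p, hp, q, hq, hpq⟩ := Finset.one_lt_card.mp hP
  have hKW : bclosure U K ⊆ ⋃ r ∈ (P.parts : Set (Finset Site)), bclosure U r := by
    refine bclosure_subset_of_step_subset (fun x hx => ?_)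
      (step_biUnion_bclosure_subset ⟨p, hp⟩ _ fun r hr r' hr' hrr' x hx y hy =>
        hκ.trans_lt (hfar r hr r' hr' hrr' x hx y hy))
    obtain ⟨r, hr, hxr⟩ := P.exists_mem hx
    exact mem_iUnion₂.mpr ⟨r, hr, subset_bclosure _ hxr⟩
  have hisolated :
      ∀ a ∈ bclosure U p, ∀ b ∈ bclosure U K, dist2 a b ≤ κ → b ∈ bclosure U p := by
    intro a ha b hb hab
    obtain ⟨r, hr, hbr⟩ := mem_iUnion₂.mp (hKW hb)
    by_cases hrp : r = p
    · exact hrp ▸ hbr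
    · exact absurd hab (hfar p hp r hr (Ne.symm hrp) a ha b hbr).not_ge
  obtain ⟨x, hx⟩ := P.nonempty_of_mem_parts hp
  obtain ⟨y, hy⟩ := P.nonempty_of_mem_parts hq
  have hyp : y ∈ bclosure U p := mem_of_reflTransGen_of_isolated hisolated (subset_bclosure _ hx)
    (hconn x (subset_bclosure _ (P.subset hp hx)) y (subset_bclosure _ (P.subset hq hy)))
  have := hfar q hq p hp hpq.symm y (subset_bclosure _ hy) y hyp
  rw [dist2_self] at this
  linarith [nu_nonneg U]

theorem exists_split_of_finpartition (hne : ∀ X ∈ U, X.Nonempty) (hκ : nu U ≤ κ)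
    {K : Finset Site} (hconn : Conn κ (bclosure U K)) (n : ℕ) :
    ∀ P : Finpartition K, #P.parts = n + 2 → (∀ p ∈ P.parts, Conn κ (bclosure U p)) →
    ∃ K₁ K₂ : Finset Site, K₁.Nonempty ∧ K₂.Nonempty ∧ Disjoint K₁ K₂ ∧ K₁ ∪ K₂ = K ∧
      Conn κ (bclosure U K₁) ∧ Conn κ (bclosure U K₂) ∧
      Conn κ (bclosure U K₁ ∪ bclosure U K₂) := by
  induction n with
  | zero =>
    intro P hcard hparts
    obtain ⟨p, hp, q, hq, hpq, x, hx, y, hy, hxy⟩ :=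
      exists_parts_bclosure_dist2_le hκ P (by omega) hconn
    have hPpq : P.parts = {p, q} := (Finset.eq_of_subset_of_card_le
      (by simp [Finset.insert_subset_iff, hp, hq]) (by rw [hcard, Finset.card_pair hpq])).symm
    refine ⟨p, q, P.nonempty_of_mem_parts hp, P.nonempty_of_mem_parts hq, P.disjoint hp hq hpq,
      ?_, hparts p hp, hparts q hq, (hparts p hp).union_of_dist_le (hparts q hq) hx hy hxy⟩
    simpa [hPpq] using P.sup_parts
  | succ n ih =>
    intro P hcard hparts
    obtain ⟨p, hp, q, hq, hpq, x, hx, y, hy, hxy⟩ :=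
      exists_parts_bclosure_dist2_le hκ P (by omega) hconn
    refine ih (P.mergeParts hp hq hpq) (by have := P.card_mergeParts hp hq hpq; omega) ?_
    intro r hr
    rcases Finset.mem_insert.mp hr with rfl | hr
    · simpa using conn_bclosure_union hne hκ (hparts p hp) (hparts q hq) hx hy hxy
    · exact hparts r (Finset.mem_of_mem_erase (Finset.mem_of_mem_erase hr))

end Splitting

theorem span_penultimate_split_general
    (U : Finset (Finset Site))
    (hcrit : Critical U)
    (K : Finset Site) (hK : 2 ≤ K.card)
    (hconn : Conn (3 * nu U) (bclosure U ↑K)) :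
    ∃ K₁ K₂ : Finset Site, K₁.Nonempty ∧ K₂.Nonempty ∧ Disjoint K₁ K₂ ∧
      K₁ ∪ K₂ = K ∧
      Conn (3 * nu U) (bclosure U ↑K₁) ∧ Conn (3 * nu U) (bclosure U ↑K₂) ∧
      Conn (3 * nu U) (bclosure U ↑K₁ ∪ bclosure U ↑K₂) := by
  obtain ⟨u, hu⟩ := hcrit.2 (1, 0) (by norm_num [unitVec])
  have hne := nonempty_of_mem_of_isStable hu.1.2
  have hκ : nu U ≤ 3 * nu U := by linarith [nu_nonneg U]
  refine exists_split_of_finpartition hne hκ hconn (#K - 2) ⊥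
    (by rw [Finpartition.card_bot]; omega) fun p hp => ?_
  obtain ⟨x, -, rfl⟩ := Finpartition.mem_bot_iff.mp hp
  simpa using conn_bclosure hne hκ (Conn.singleton _ x)

/-- **Lemma 5.12 (splitting strongly connected closures).**  If `K` is a finite set with
`|K| ≥ 2` whose closure `[K]` is strongly connected, then `K` can be partitioned into
nonempty sets `K₁, K₂` such that `[K₁]`, `[K₂]` and `[K₁] ∪ [K₂]` are all strongly
connected. -/
theorem span_penultimate_split
    (U : Finset (Finset Site)) (hU : ∀ X ∈ U, (0 : Site) ∉ X)
    (hcrit : Critical U) (hunbal : ¬ BalancedCond U)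
    (K : Finset Site) (hK : 2 ≤ K.card)
    (hconn : Conn (3 * nu U) (bclosure U ↑K)) :
    ∃ K₁ K₂ : Finset Site, K₁.Nonempty ∧ K₂.Nonempty ∧ Disjoint K₁ K₂ ∧
      K₁ ∪ K₂ = K ∧
      Conn (3 * nu U) (bclosure U ↑K₁) ∧ Conn (3 * nu U) (bclosure U ↑K₂) ∧
      Conn (3 * nu U) (bclosure U ↑K₁ ∪ bclosure U ↑K₂) :=
  span_penultimate_split_general U hcrit K hK hconn

end BP
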